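/- Let R be a finite proper nearfield and T an R-subgroup of R^n with dim(T) = ℓ ≥ 1. Then the seed number of T (the minimum size of a generating set) equals min{ k : (|R|^k − 1)/(|R| − 1) ≥ ℓ }. In particular, log_{|R|}(ℓ) ≤ seed(T) ≤ 2 + log_{|R|}(ℓ). -/

import Mathlib

/-!
If `S = {s₁, …, s_k}` generates `T` and `t_j` lies in the support of `u_j`, the columns
`(s_i(t_j))_i ∈ R^k` are nonzero and pairwise non-proportional: were column `j'` equal to `a` times
column `j`, the `R`-subgroup `{v | v(t_j') = a v(t_j)}` would contain `S` but not `u_j'`.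
Normalising the first nonzero entry to `1` embeds them into `c(k,R)`, of size
`(|R|^k - 1)/(|R| - 1)`.

Conversely, the rows of a `k × ℓ` matrix with pairwise non-proportional nonzero columns generate
`R^ℓ` when `R` is proper. By induction on `ℓ`, the generated subgroup projects onto `R^(ℓ-1)`;
if it is not everything, its last coordinate is a form `Σ β_j x_j` of the others commuting with
right multiplication, and the failure of right distributivity forces at most one `β_j ≠ 0`, making
the last column proportional to another. Since the supports are disjoint, `x ↦ Σ u_j x_j` is an
`R`-homomorphism of `R^ℓ` onto `T`; it carries the `k` rows of a matrix whose columns are `ℓ`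
distinct elements of `c(k,R)` to `k` generators of `T`.
-/

open scoped BigOperators

/-- A (left) nearfield: a zero-symmetric (left) nearring whose nonzero
elements form a multiplicative group. The additive group is abelian. -/
class Nearfield (R : Type*) extends AddCommGroup R, One R, Mul R, Inv R where
  protected mul_assoc : ∀ a b c : R, a * b * c = a * (b * c)
  protected left_distrib : ∀ a b c : R, a * (b + c) = a * b + a * c
  protected zero_mul : ∀ a : R, (0 : R) * a = 0
  protected mul_zero : ∀ a : R, a * (0 : R) = 0
  protected one_mul : ∀ a : R, (1 : R) * a = a
  protected mul_one : ∀ a : R, a * (1 : R) = a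
  protected one_ne_zero : (1 : R) ≠ 0
  protected mul_inv_cancel : ∀ a : R, a ≠ 0 → a * a⁻¹ = 1
  protected inv_mul_cancel : ∀ a : R, a ≠ 0 → a⁻¹ * a = 1

namespace Nearfield

/-- A nearfield is proper if it is not a skewfield (right distributivity fails). -/
def IsProper (R : Type*) [Nearfield R] : Prop :=
  ∃ a b c : R, (a + b) * c ≠ a * c + b * c

variable {R : Type*} [Nearfield R]

/-- Right scalar multiplication on `R^n`, applied coordinatewise. -/
def vsmul {n : ℕ} (v : Fin n → R) (r : R) : Fin n → R := fun i => v i * r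

/-- An `R`-subgroup of `R^n`: an additive subgroup closed under right scalar
multiplication. -/
def IsRSubgroup {n : ℕ} (H : Set (Fin n → R)) : Prop :=
  (0 : Fin n → R) ∈ H ∧ (∀ x ∈ H, ∀ y ∈ H, x + y ∈ H) ∧
    (∀ x ∈ H, -x ∈ H) ∧ (∀ x ∈ H, ∀ r : R, vsmul x r ∈ H)

/-- `gen S` is the smallest `R`-subgroup containing `S`. -/
def gen {n : ℕ} (S : Set (Fin n → R)) : Set (Fin n → R) :=
  ⋂₀ {H : Set (Fin n → R) | IsRSubgroup H ∧ S ⊆ H}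

/-- The support of a vector. -/
def supp {n : ℕ} (u : Fin n → R) : Set (Fin n) := {i | u i ≠ 0}

/-- `dirSum u = { Σ_i u_i r_i : r_i ∈ R }`. -/
def dirSum {n ℓ : ℕ} (u : Fin ℓ → Fin n → R) : Set (Fin n → R) :=
  {v | ∃ r : Fin ℓ → R, v = ∑ i, vsmul (u i) (r i)}

/-- The "scalar product" `⟨x,y⟩ = Σ_i x_i·y_i`. -/
def dot {n : ℕ} (x y : Fin n → R) : R := ∑ i, x i * y i

/-- The weight of a vector: the number of its nonzero coordinates. -/
noncomputable def weight {n : ℕ} (u : Fin n → R) : ℕ := (supp u).ncard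

/-- A vector is simple if it has weight one or two. -/
def IsSimple {n : ℕ} (u : Fin n → R) : Prop := weight u = 1 ∨ weight u = 2

/-- The orthogonal set `D^⊥`. -/
def perp {n : ℕ} (D : Set (Fin n → R)) : Set (Fin n → R) :=
  {x | ∀ e ∈ D, dot e x = 0}

/-- `c(k,R)`: nonzero vectors of `R^k` whose first nonzero coordinate is `1`. -/
def cSet (R : Type*) [Nearfield R] (k : ℕ) : Set (Fin k → R) :=
  {u | ∃ i : Fin k, u i = 1 ∧ ∀ j : Fin k, j < i → u j = 0}

/-- The seed number of `T`: the least size of a set generating `T`. -/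
noncomputable def seed {n : ℕ} (T : Set (Fin n → R)) : ℕ :=
  sInf {k | ∃ S : Finset (Fin n → R), S.card = k ∧ gen (↑S : Set (Fin n → R)) = T}

/-- Iterated linear-combination closures. -/
def LC {n : ℕ} (S : Set (Fin n → R)) : ℕ → Set (Fin n → R)
  | 0 => S
  | m + 1 => {v | ∃ (ℓ : ℕ) (w : Fin ℓ → Fin n → R) (lam : Fin ℓ → R),
      (∀ i, w i ∈ LC S m) ∧ v = ∑ i, vsmul (w i) (lam i)}

end Nearfield

/-- Stirling numbers of the second kind. -/
def stirling2 : ℕ → ℕ → ℕ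
  | 0, 0 => 1
  | 0, _ + 1 => 0
  | _ + 1, 0 => 0
  | n + 1, k + 1 => (k + 1) * stirling2 n (k + 1) + stirling2 n k

open Nearfield

section GeomSum

variable {q : ℕ}

theorem le_pow_sub_one_div_sub_one (hq : 2 ≤ q) (ℓ : ℕ) : ℓ ≤ (q ^ ℓ - 1) / (q - 1) := by
  rw [← Nat.geomSum_eq hq]
  calc ℓ = ∑ _i ∈ Finset.range ℓ, 1 := by simp
    _ ≤ ∑ i ∈ Finset.range ℓ, q ^ i :=
      Finset.sum_le_sum fun i _ => Nat.one_le_pow _ _ (by omega)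

theorem logb_le_sInf_geom (hq : 2 ≤ q) (ℓ : ℕ) :
    Real.logb q ℓ ≤ (sInf {k : ℕ | ℓ ≤ (q ^ k - 1) / (q - 1)} : ℕ) := by
  set s := sInf {k : ℕ | ℓ ≤ (q ^ k - 1) / (q - 1)}
  have hs : ℓ ≤ (q ^ s - 1) / (q - 1) :=
    Nat.sInf_mem (s := {k : ℕ | ℓ ≤ (q ^ k - 1) / (q - 1)}) ⟨ℓ, le_pow_sub_one_div_sub_one hq ℓ⟩
  rw [← Nat.geomSum_eq hq] at hs
  have hlt : ℓ < q ^ s := hs.trans_lt (Nat.geomSum_lt hq fun _ => Finset.mem_range.1)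
  rcases Nat.eq_zero_or_pos ℓ with rfl | hℓ
  · simp
  · rw [Real.logb_le_iff_le_rpow (by exact_mod_cast hq) (by exact_mod_cast hℓ),
      Real.rpow_natCast]
    exact_mod_cast hlt.le

theorem sInf_geom_le_two_add_logb (hq : 2 ≤ q) (ℓ : ℕ) :
    ((sInf {k : ℕ | ℓ ≤ (q ^ k - 1) / (q - 1)} : ℕ) : ℝ) ≤ 2 + Real.logb q ℓ := by
  set s := sInf {k : ℕ | ℓ ≤ (q ^ k - 1) / (q - 1)}
  have hlog : 0 ≤ Real.logb q ℓ :=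
    div_nonneg (Real.log_natCast_nonneg ℓ) (Real.log_natCast_nonneg q)
  rcases Nat.lt_or_ge s 2 with hs | hs
  · have : (s : ℝ) < 2 := by exact_mod_cast hs
    linarith
  obtain ⟨m, hm⟩ := Nat.exists_eq_add_of_le' hs
  have hpow : q ^ m < ℓ :=
    calc q ^ m ≤ ∑ i ∈ Finset.range (m + 1), q ^ i :=
          Finset.single_le_sum (fun _ _ => Nat.zero_le _) (Finset.self_mem_range_succ m)
      _ = (q ^ (m + 1) - 1) / (q - 1) := Nat.geomSum_eq hq _
      _ < ℓ := not_le.1 (Nat.notMem_of_lt_sInf (s := {k : ℕ | ℓ ≤ (q ^ k - 1) / (q - 1)})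
        (show m + 1 < s by omega))
  have hℓ : (0 : ℝ) < ℓ := by exact_mod_cast (Nat.zero_le _).trans_lt hpow
  have hmlog : (m : ℝ) < Real.logb q ℓ := by
    rw [Real.lt_logb_iff_rpow_lt (by exact_mod_cast hq) hℓ, Real.rpow_natCast]
    exact_mod_cast hpow
  rw [hm]
  push_cast
  linarith

end GeomSum

namespace Nearfield

variable {R : Type*} [Nearfield R]

abbrev toMonoidWithZero : MonoidWithZero R where
  mul_assoc := Nearfield.mul_assoc
  one_mul := Nearfield.one_mul
  mul_one := Nearfield.mul_one
  zero_mul := Nearfield.zero_mul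
  mul_zero := Nearfield.mul_zero

-- Only local: as a global instance it would give `0 : R` a second elaboration path.
attribute [local instance] toMonoidWithZero

instance : LeftDistribClass R := ⟨Nearfield.left_distrib⟩

theorem inv_mul_cancel_left₀ {a : R} (ha : a ≠ 0) (b : R) : a⁻¹ * (a * b) = b := by
  rw [← mul_assoc, Nearfield.inv_mul_cancel a ha, one_mul]

theorem mul_inv_cancel_left₀ {a : R} (ha : a ≠ 0) (b : R) : a * (a⁻¹ * b) = b := by
  rw [← mul_assoc, Nearfield.mul_inv_cancel a ha, one_mul]

theorem mul_neg (a b : R) : a * -b = -(a * b) :=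
  eq_neg_of_add_eq_zero_left (by rw [← mul_add, neg_add_cancel, mul_zero])

instance : Nontrivial R := ⟨⟨1, 0, Nearfield.one_ne_zero⟩⟩

section RSubgroup

variable {n : ℕ}

theorem subset_gen (S : Set (Fin n → R)) : S ⊆ gen S :=
  fun _ hx _ hH => hH.2 hx

theorem gen_subset {S H : Set (Fin n → R)} (hH : IsRSubgroup H) (hSH : S ⊆ H) : gen S ⊆ H :=
  Set.sInter_subset_of_mem ⟨hH, hSH⟩

theorem isRSubgroup_gen (S : Set (Fin n → R)) : IsRSubgroup (gen S) :=
  ⟨fun _ hH => hH.1.1, fun _ hx _ hy H hH => hH.1.2.1 _ (hx H hH) _ (hy H hH),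
    fun _ hx H hH => hH.1.2.2.1 _ (hx H hH), fun _ hx r H hH => hH.1.2.2.2 _ (hx H hH) r⟩

theorem IsRSubgroup.sub_mem {M : Set (Fin n → R)} (hM : IsRSubgroup M) {x y : Fin n → R}
    (hx : x ∈ M) (hy : y ∈ M) : x - y ∈ M := by
  rw [sub_eq_add_neg]
  exact hM.2.1 x hx (-y) (hM.2.2.1 y hy)

theorem IsRSubgroup.sum_mem {M : Set (Fin n → R)} (hM : IsRSubgroup M) {ι : Type*}
    (s : Finset ι) {f : ι → Fin n → R} (h : ∀ i ∈ s, f i ∈ M) : ∑ i ∈ s, f i ∈ M := by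
  classical
  induction s using Finset.induction_on with
  | empty => simpa using hM.1
  | insert i s hi ih =>
    rw [Finset.sum_insert hi]
    exact hM.2.1 _ (h i (s.mem_insert_self i)) _ (ih fun j hj => h j (s.mem_insert_of_mem hj))

theorem isRSubgroup_setOf_apply_eq_mul (p q : Fin n) (β : R) :
    IsRSubgroup {v : Fin n → R | v p = β * v q} := by
  refine ⟨(mul_zero β).symm, fun x (hx : x p = _) y (hy : y p = _) => ?_,
    fun x (hx : x p = _) => ?_, fun x (hx : x p = _) r => ?_⟩
  · show x p + y p = β * (x q + y q)
    rw [hx, hy, mul_add]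
  · show -x p = β * -x q
    rw [hx, Nearfield.mul_neg]
  · show x p * r = β * (x q * r)
    rw [hx, mul_assoc]

theorem apply_eq_mul_of_mem_gen {S : Set (Fin n → R)} {p q : Fin n} {β : R}
    (hS : ∀ s ∈ S, s p = β * s q) {v : Fin n → R} (hv : v ∈ gen S) : v p = β * v q :=
  gen_subset (isRSubgroup_setOf_apply_eq_mul p q β) hS hv

end RSubgroup

section RHom

variable {m n : ℕ}

structure IsRHom (φ : (Fin m → R) → Fin n → R) : Prop where
  map_add : ∀ x y, φ (x + y) = φ x + φ y
  map_vsmul : ∀ x r, φ (vsmul x r) = vsmul (φ x) r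

namespace IsRHom

variable {φ : (Fin m → R) → Fin n → R}

theorem map_zero (hφ : IsRHom φ) : φ 0 = 0 := by
  simpa using hφ.map_add 0 0

theorem map_neg (hφ : IsRHom φ) (x : Fin m → R) : φ (-x) = -φ x :=
  eq_neg_of_add_eq_zero_left (by rw [← hφ.map_add, neg_add_cancel, hφ.map_zero])

theorem isRSubgroup_image (hφ : IsRHom φ) {M : Set (Fin m → R)} (hM : IsRSubgroup M) :
    IsRSubgroup (φ '' M) := by
  refine ⟨⟨0, hM.1, hφ.map_zero⟩, ?_, ?_, ?_⟩
  · rintro _ ⟨x, hx, rfl⟩ _ ⟨y, hy, rfl⟩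
    exact ⟨x + y, hM.2.1 x hx y hy, hφ.map_add x y⟩
  · rintro _ ⟨x, hx, rfl⟩
    exact ⟨-x, hM.2.2.1 x hx, hφ.map_neg x⟩
  · rintro _ ⟨x, hx, rfl⟩ r
    exact ⟨vsmul x r, hM.2.2.2 x hx r, hφ.map_vsmul x r⟩

theorem isRSubgroup_preimage (hφ : IsRHom φ) {H : Set (Fin n → R)} (hH : IsRSubgroup H) :
    IsRSubgroup (φ ⁻¹' H) := by
  refine ⟨?_, fun x hx y hy => ?_, fun x hx => ?_, fun x hx r => ?_⟩
  · simpa [Set.mem_preimage, hφ.map_zero] using hH.1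
  · simpa [Set.mem_preimage, hφ.map_add] using hH.2.1 _ hx _ hy
  · simpa [Set.mem_preimage, hφ.map_neg] using hH.2.2.1 _ hx
  · simpa [Set.mem_preimage, hφ.map_vsmul] using hH.2.2.2 _ hx r

theorem gen_image (hφ : IsRHom φ) (S : Set (Fin m → R)) : gen (φ '' S) = φ '' gen S :=
  (gen_subset (hφ.isRSubgroup_image (isRSubgroup_gen S)) (Set.image_mono (subset_gen S))).antisymm
    (Set.image_subset_iff.2 <| gen_subset (hφ.isRSubgroup_preimage (isRSubgroup_gen _))
      fun _ hx => subset_gen _ (Set.mem_image_of_mem φ hx))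

end IsRHom

theorem isRHom_init {ℓ : ℕ} : IsRHom (Fin.init : (Fin (ℓ + 1) → R) → Fin ℓ → R) :=
  ⟨fun _ _ => rfl, fun _ _ => rfl⟩

end RHom

section LinearForm

variable {ι : Type*} [Fintype ι]

theorem sum_mul_mul_of_support_subsingleton {a : ι → R}
    (ha : (Function.support a).Subsingleton) (x : ι → R) (r : R) :
    ∑ i, a i * (x i * r) = (∑ i, a i * x i) * r := by
  by_cases h : ∃ j, a j ≠ 0
  · obtain ⟨j, hj⟩ := h
    have hzero : ∀ i ≠ j, a i = 0 := fun i hi => by_contra fun hai => hi (ha hai hj)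
    rw [Fintype.sum_eq_single j fun i hi => by rw [hzero i hi, zero_mul],
      Fintype.sum_eq_single j fun i hi => by rw [hzero i hi, zero_mul], mul_assoc]
  · push Not at h
    simp [h]

theorem support_subsingleton_of_sum_mul_mul (hR : IsProper R) [DecidableEq ι] {β : ι → R}
    (h : ∀ (x : ι → R) (r : R), ∑ i, β i * (x i * r) = (∑ i, β i * x i) * r) :
    (Function.support β).Subsingleton := by
  intro j (hj : β j ≠ 0) j' (hj' : β j' ≠ 0)
  by_contra hne
  obtain ⟨a, b, c, habc⟩ := hR
  let x : ι → R := fun i => if i = j then (β j)⁻¹ * a else if i = j' then (β j')⁻¹ * b else 0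
  -- for this `x`, `h x c` reads `(a + b) * c = a * c + b * c`
  have hsum : ∀ r : R, ∑ i, β i * (x i * r) = a * r + b * r := fun r => by
    rw [Fintype.sum_eq_add j j' hne fun i ⟨hij, hij'⟩ => by simp [x, hij, hij']]
    simp [x, Ne.symm hne, mul_assoc, mul_inv_cancel_left₀ hj, mul_inv_cancel_left₀ hj']
  have hsum_one : ∑ i, β i * x i = a + b := by simpa using hsum 1
  exact habc (by rw [← hsum_one, ← h, hsum])

end LinearForm

section Graph

variable {ℓ : ℕ} {M : Set (Fin (ℓ + 1) → R)}

theorem eq_univ_of_init_image_eq_univ (hM : IsRSubgroup M) (hsurj : Fin.init '' M = Set.univ)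
    {e : Fin (ℓ + 1) → R} (he : e ∈ M) (he0 : Fin.init e = 0) (hlast : e (Fin.last ℓ) ≠ 0) :
    M = Set.univ := by
  refine Set.eq_univ_of_forall fun x => ?_
  obtain ⟨y, hy, hyx⟩ := Set.eq_univ_iff_forall.1 hsurj (Fin.init x)
  have hx : y + vsmul e ((e (Fin.last ℓ))⁻¹ * (x (Fin.last ℓ) - y (Fin.last ℓ))) = x := by
    funext i
    refine Fin.lastCases ?_ (fun j => ?_) i
    · simp [vsmul, mul_inv_cancel_left₀ hlast]
    · have he0j : e j.castSucc = 0 := congrFun he0 j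
      have hyxj : y j.castSucc = x j.castSucc := congrFun hyx j
      simp [vsmul, he0j, hyxj]
  exact hx ▸ hM.2.1 _ hy _ (hM.2.2.2 _ he _)

theorem exists_last_eq_sum (hM : IsRSubgroup M) (hsurj : Fin.init '' M = Set.univ)
    (hker : ∀ m ∈ M, Fin.init m = 0 → m (Fin.last ℓ) = 0) :
    ∃ β : Fin ℓ → R, ∀ m ∈ M, m (Fin.last ℓ) = ∑ j, β j * m j.castSucc := by
  classical
  choose e he hei using fun j : Fin ℓ => Set.eq_univ_iff_forall.1 hsurj (Pi.single j 1)
  refine ⟨fun j => e j (Fin.last ℓ), fun m hm => ?_⟩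
  let y := ∑ j, vsmul (e j) (m j.castSucc)
  have hy : y ∈ M := hM.sum_mem _ fun j _ => hM.2.2.2 _ (he j) _
  have hinit : Fin.init (y - m) = 0 := by
    funext j'
    have hej : ∀ j, e j j'.castSucc = (Pi.single j 1 : Fin ℓ → R) j' := fun j => congrFun (hei j) j'
    simp [y, Fin.init, vsmul, Finset.sum_apply, hej, Pi.single_apply]
  have hlast := hker _ (hM.sub_mem hy hm) hinit
  rw [Pi.sub_apply, sub_eq_zero] at hlast
  simp [← hlast, y, Finset.sum_apply, vsmul]

theorem exists_support_subsingleton_last_eq_sum (hR : IsProper R) (hM : IsRSubgroup M)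
    (hsurj : Fin.init '' M = Set.univ) (hker : ∀ m ∈ M, Fin.init m = 0 → m (Fin.last ℓ) = 0) :
    ∃ β : Fin ℓ → R, (Function.support β).Subsingleton ∧
      ∀ m ∈ M, m (Fin.last ℓ) = ∑ j, β j * m j.castSucc := by
  obtain ⟨β, hβ⟩ := exists_last_eq_sum hM hsurj hker
  refine ⟨β, support_subsingleton_of_sum_mul_mul hR fun x r => ?_, hβ⟩
  obtain ⟨m, hm, rfl⟩ := Set.eq_univ_iff_forall.1 hsurj x
  exact (hβ _ (hM.2.2.2 m hm r)).symm.trans (congrArg (· * r) (hβ m hm))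

end Graph

section Nonproportional

variable {k : ℕ}

def Nonproportional {ι : Type*} (v : ι → Fin k → R) : Prop :=
  (∀ j, v j ≠ 0) ∧ ∀ j j' (a : R), (v j' = fun i => a * v j i) → j' = j

theorem Nonproportional.comp {ι κ : Type*} {v : ι → Fin k → R} (hv : Nonproportional v)
    {f : κ → ι} (hf : f.Injective) : Nonproportional (v ∘ f) :=
  ⟨fun j => hv.1 (f j), fun _ _ a h => hf (hv.2 _ _ a h)⟩

theorem nonproportional_of_mem_gen {ι : Type*} {n : ℕ} {w : Fin k → Fin n → R}
    {u : ι → Fin n → R} {t : ι → Fin n} (hu : ∀ j, u j ∈ gen (Set.range w))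
    (ht : ∀ j, u j (t j) ≠ 0) (hoff : ∀ j j', j ≠ j' → u j (t j') = 0) :
    Nonproportional fun j i => w i (t j) := by
  refine ⟨fun j h => ht j ?_, fun j j' a h => by_contra fun hne => ht j' ?_⟩
  · simpa using apply_eq_mul_of_mem_gen (q := t j) (β := 0)
      (by rintro _ ⟨i, rfl⟩; simpa using congrFun h i) (hu j)
  · rw [apply_eq_mul_of_mem_gen (β := a) (by rintro _ ⟨i, rfl⟩; exact congrFun h i) (hu j'),
      hoff j' j hne, mul_zero]

theorem Nonproportional.gen_range_eq_univ (hR : IsProper R) {ℓ : ℕ} {v : Fin ℓ → Fin k → R}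
    (hv : Nonproportional v) : gen (Set.range fun i j => v j i) = Set.univ := by
  induction ℓ with
  | zero =>
    exact Set.eq_univ_of_forall fun x =>
      Subsingleton.elim (0 : Fin 0 → R) x ▸ (isRSubgroup_gen _).1
  | succ ℓ ih =>
    set M := gen (Set.range fun i j => v j i)
    have hM : IsRSubgroup M := isRSubgroup_gen _
    have hsurj : Fin.init '' M = Set.univ := by
      rw [← isRHom_init.gen_image, ← Set.range_comp]
      exact ih (hv.comp (Fin.castSucc_injective ℓ))
    by_cases hker : ∀ m ∈ M, Fin.init m = 0 → m (Fin.last ℓ) = 0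
    · exfalso
      obtain ⟨β, hβ, hlast⟩ := exists_support_subsingleton_last_eq_sum hR hM hsurj hker
      have hcol : ∀ i, v (Fin.last ℓ) i = ∑ j, β j * v j.castSucc i :=
        fun i => hlast _ (subset_gen _ ⟨i, rfl⟩)
      rcases hβ.eq_empty_or_singleton with h | ⟨j₀, h⟩
      · exact hv.1 (Fin.last ℓ) (funext fun i => by simp [hcol, Function.support_eq_empty_iff.1 h])
      · refine (Fin.castSucc_lt_last j₀).ne' (hv.2 j₀.castSucc _ (β j₀) (funext fun i => ?_))
        rw [hcol, Fintype.sum_eq_single j₀ fun j hj => ?_]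
        rw [show β j = 0 from Function.notMem_support.1 (h ▸ hj), zero_mul]
    · push Not at hker
      obtain ⟨e, he, he0, hlast⟩ := hker
      exact eq_univ_of_init_image_eq_univ hM hsurj he he0 hlast

end Nonproportional

section cSet

variable {k : ℕ}

theorem ne_zero_of_mem_cSet {w : Fin k → R} (hw : w ∈ cSet R k) : w ≠ 0 := by
  obtain ⟨i, hi, -⟩ := hw
  exact Function.ne_iff.2 ⟨i, by simp [hi]⟩

theorem eq_of_mem_cSet_of_eq_mul {w w' : Fin k → R} (hw : w ∈ cSet R k)
    (hw' : w' ∈ cSet R k) {a : R} (h : w' = fun i => a * w i) : w' = w := by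
  obtain ⟨i, hi, hlt⟩ := hw
  obtain ⟨i', hi', hlt'⟩ := hw'
  have ha : w' i = a := by simp [h, hi]
  obtain rfl : i' = i := by
    rcases lt_trichotomy i' i with hi'i | hi'i | hii'
    · have h1 := congrFun h i'
      rw [hi', hlt i' hi'i, mul_zero] at h1
      exact absurd h1 one_ne_zero
    · exact hi'i
    · have h1 := congrFun h i'
      rw [hi', ← ha, hlt' i hii', zero_mul] at h1
      exact absurd h1 one_ne_zero
  rw [h, ← ha, hi', funext_iff]
  simp

theorem exists_mem_cSet_eq_mul {v : Fin k → R} (hv : v ≠ 0) :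
    ∃ b ≠ 0, ∃ w ∈ cSet R k, v = fun i => b * w i := by
  classical
  have hex : ∃ i, v i ≠ 0 := Function.ne_iff.1 hv
  set i₀ := Fin.find _ hex
  have hi₀ : v i₀ ≠ 0 := Fin.find_spec hex
  have hmin : ∀ j < i₀, v j = 0 := fun j hj => not_not.1 (Fin.find_min hex hj)
  refine ⟨v i₀, hi₀, fun i => (v i₀)⁻¹ * v i,
    ⟨i₀, Nearfield.inv_mul_cancel _ hi₀, fun j hj => by simp [hmin j hj]⟩,
    funext fun i => (mul_inv_cancel_left₀ hi₀ _).symm⟩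

theorem card_cSet [Fintype R] (k : ℕ) :
    Nat.card (cSet R k) = (Fintype.card R ^ k - 1) / (Fintype.card R - 1) := by
  classical
  let Φ : cSet R k × {b : R // b ≠ 0} → {v : Fin k → R // v ≠ 0} := fun p =>
    ⟨fun i => p.2.1 * p.1.1 i, by
      obtain ⟨i, hi, -⟩ := p.1.2
      exact Function.ne_iff.2 ⟨i, by simpa [hi] using p.2.2⟩⟩
  have hΦ : Function.Bijective Φ := by
    refine ⟨?_, ?_⟩
    · rintro ⟨⟨w, hw⟩, b, hb⟩ ⟨⟨w', hw'⟩, b', hb'⟩ h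
      have h' : ∀ i, b * w i = b' * w' i := congrFun (congrArg Subtype.val h)
      obtain rfl : w' = w := eq_of_mem_cSet_of_eq_mul hw hw' (a := b'⁻¹ * b)
        (funext fun i => by rw [mul_assoc, h' i, inv_mul_cancel_left₀ hb'])
      obtain ⟨i, hi, -⟩ := hw
      obtain rfl : b = b' := by simpa [hi] using h' i
      rfl
    · rintro ⟨v, hv⟩
      obtain ⟨b, hb, w, hw, rfl⟩ := exists_mem_cSet_eq_mul hv
      exact ⟨(⟨w, hw⟩, ⟨b, hb⟩), rfl⟩
  have hcard := Nat.card_eq_of_bijective Φ hΦ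
  rw [Nat.card_prod, Nat.card_eq_fintype_card (α := {b : R // b ≠ 0}),
    Nat.card_eq_fintype_card (α := {v : Fin k → R // v ≠ 0})] at hcard
  simp only [Fintype.card_subtype_compl, Fintype.card_subtype_eq, Fintype.card_fun,
    Fintype.card_fin] at hcard
  have hq : 0 < Fintype.card R - 1 := Nat.sub_pos_of_lt Fintype.one_lt_card
  rw [← hcard, Nat.mul_div_cancel _ hq]

theorem Nonproportional.card_le_card_cSet [Finite R] {ι : Type*} {v : ι → Fin k → R}
    (hv : Nonproportional v) : Nat.card ι ≤ Nat.card (cSet R k) := by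
  choose b hb w hw hvw using fun j => exists_mem_cSet_eq_mul (hv.1 j)
  refine Nat.card_le_card_of_injective (fun j => (⟨w j, hw j⟩ : cSet R k)) fun j j' h => ?_
  have h' : w j = w j' := congrArg Subtype.val h
  refine hv.2 j' j (b j * (b j')⁻¹) (funext fun i => ?_)
  simp only [hvw, h', mul_assoc, inv_mul_cancel_left₀ (hb j')]

theorem nonproportional_coe_cSet {ι : Type*} {g : ι → cSet R k} (hg : g.Injective) :
    Nonproportional fun j => (g j : Fin k → R) :=
  ⟨fun j => ne_zero_of_mem_cSet (g j).2,
    fun j j' _ h => hg (Subtype.ext (eq_of_mem_cSet_of_eq_mul (g j).2 (g j').2 h))⟩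

end cSet

section DirSum

variable {n ℓ : ℕ} (u : Fin ℓ → Fin n → R)

def linComb (x : Fin ℓ → R) : Fin n → R := ∑ j, vsmul (u j) (x j)

theorem range_linComb : Set.range (linComb u) = dirSum u := by
  ext v
  exact ⟨fun ⟨x, hx⟩ => ⟨x, hx.symm⟩, fun ⟨x, hx⟩ => ⟨x, hx.symm⟩⟩

theorem mem_dirSum_self (j : Fin ℓ) : u j ∈ dirSum u :=
  ⟨Pi.single j 1, funext fun i => by simp [vsmul, Finset.sum_apply, Pi.single_apply]⟩

variable {u}

theorem support_apply_subsingleton (hdisj : ∀ i j, i ≠ j → supp (u i) ∩ supp (u j) = ∅)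
    (i : Fin n) : (Function.support fun j => u j i).Subsingleton :=
  fun j hj j' hj' => by_contra fun hne =>
    Set.eq_empty_iff_forall_notMem.1 (hdisj j j' hne) i ⟨hj, hj'⟩

theorem isRHom_linComb (hdisj : ∀ i j, i ≠ j → supp (u i) ∩ supp (u j) = ∅) :
    IsRHom (linComb u) where
  map_add x y := funext fun i => by
    simp [linComb, Finset.sum_apply, vsmul, mul_add, Finset.sum_add_distrib]
  map_vsmul x r := funext fun i => by
    simpa [linComb, Finset.sum_apply, vsmul] using
      sum_mul_mul_of_support_subsingleton (support_apply_subsingleton hdisj i) x r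

theorem exists_card_le_gen_eq_dirSum [Finite R] (hR : IsProper R)
    (hdisj : ∀ i j, i ≠ j → supp (u i) ∩ supp (u j) = ∅) {k : ℕ}
    (hk : ℓ ≤ Nat.card (cSet R k)) :
    ∃ S : Finset (Fin n → R), S.card ≤ k ∧ gen ↑S = dirSum u := by
  classical
  let g : Fin ℓ → cSet R k := (Finite.equivFin _).symm ∘ Fin.castLE hk
  have hg : g.Injective := (Equiv.injective _).comp (Fin.castLE_injective hk)
  let rows : Fin k → Fin ℓ → R := fun i j => (g j : Fin k → R) i
  refine ⟨Finset.univ.image (linComb u ∘ rows), Finset.card_image_le.trans_eq (by simp), ?_⟩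
  rw [Finset.coe_image, Finset.coe_univ, Set.image_univ, Set.range_comp,
    (isRHom_linComb hdisj).gen_image, (nonproportional_coe_cSet hg).gen_range_eq_univ hR,
    Set.image_univ, range_linComb]

theorem card_le_card_cSet_of_gen_eq_dirSum [Finite R] (hne : ∀ j, u j ≠ 0)
    (hdisj : ∀ i j, i ≠ j → supp (u i) ∩ supp (u j) = ∅) (S : Finset (Fin n → R))
    (hS : gen ↑S = dirSum u) : ℓ ≤ Nat.card (cSet R S.card) := by
  choose t ht using fun j => Function.ne_iff.1 (hne j)
  let w : Fin S.card → Fin n → R := fun i => S.equivFin.symm i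
  have hw : Set.range w = S := Set.ext fun v =>
    ⟨fun ⟨i, hi⟩ => hi ▸ (S.equivFin.symm i).2, fun hv => ⟨S.equivFin ⟨v, hv⟩, by simp [w]⟩⟩
  have hoff : ∀ j j', j ≠ j' → u j (t j') = 0 := fun j j' hjj' =>
    by_contra fun h => hjj' (support_apply_subsingleton hdisj (t j') h (ht j'))
  simpa using (nonproportional_of_mem_gen (w := w)
    (fun j => hw ▸ hS ▸ mem_dirSum_self u j) ht hoff).card_le_card_cSet

theorem seed_dirSum [Fintype R] (hR : IsProper R) (hne : ∀ j, u j ≠ 0)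
    (hdisj : ∀ i j, i ≠ j → supp (u i) ∩ supp (u j) = ∅) :
    seed (dirSum u) = sInf {k | ℓ ≤ (Fintype.card R ^ k - 1) / (Fintype.card R - 1)} := by
  unfold seed
  simp_rw [← card_cSet]
  have hB : {k | ℓ ≤ Nat.card (cSet R k)}.Nonempty := ⟨ℓ, show ℓ ≤ Nat.card (cSet R ℓ) by
    rw [card_cSet]; exact le_pow_sub_one_div_sub_one Fintype.one_lt_card ℓ⟩
  obtain ⟨S, hSk, hS⟩ := exists_card_le_gen_eq_dirSum hR hdisj (Nat.sInf_mem hB)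
  let A := {k | ∃ S : Finset (Fin n → R), S.card = k ∧ gen ↑S = dirSum u}
  have hSA : S.card ∈ A := ⟨S, rfl, hS⟩
  refine le_antisymm ((Nat.sInf_le hSA).trans hSk) (Nat.sInf_le ?_)
  obtain ⟨T, hT, hTgen⟩ : sInf A ∈ A := Nat.sInf_mem ⟨_, hSA⟩
  show ℓ ≤ Nat.card (cSet R (sInf A))
  rw [← hT]
  exact card_le_card_cSet_of_gen_eq_dirSum hne hdisj T hTgen

end DirSum

end Nearfield

theorem seed_eq_general {R : Type*} [Nearfield R] [Fintype R]
    (hR : IsProper R) {n ℓ : ℕ}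
    (T : Set (Fin n → R)) (u : Fin ℓ → Fin n → R)
    (hne : ∀ i, u i ≠ 0)
    (hdisj : ∀ i j, i ≠ j → supp (u i) ∩ supp (u j) = ∅)
    (hT : T = dirSum u) :
    seed T = sInf {k : ℕ | ℓ ≤ (Fintype.card R ^ k - 1) / (Fintype.card R - 1)} ∧
      Real.logb (Fintype.card R) ℓ ≤ (seed T : ℝ) ∧
      (seed T : ℝ) ≤ 2 + Real.logb (Fintype.card R) ℓ := by
  have hq : 2 ≤ Fintype.card R := Fintype.one_lt_card
  rw [hT, seed_dirSum hR hne hdisj]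
  exact ⟨rfl, logb_le_sInf_geom hq ℓ, sInf_geom_le_two_add_logb hq ℓ⟩

/-- The seed number of an `ℓ`-dimensional `R`-subgroup equals
`min{ k : (|R|^k − 1)/(|R| − 1) ≥ ℓ }`; in particular it is between
`log_{|R|} ℓ` and `2 + log_{|R|} ℓ`. -/
theorem seed_eq {R : Type*} [Nearfield R] [Fintype R]
    (hR : IsProper R) {n ℓ : ℕ} (hl : 1 ≤ ℓ)
    (T : Set (Fin n → R)) (u : Fin ℓ → Fin n → R)
    (hne : ∀ i, u i ≠ 0)
    (hdisj : ∀ i j, i ≠ j → supp (u i) ∩ supp (u j) = ∅)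
    (hT : T = dirSum u) :
    seed T = sInf {k : ℕ | ℓ ≤ (Fintype.card R ^ k - 1) / (Fintype.card R - 1)} ∧
      Real.logb (Fintype.card R) ℓ ≤ (seed T : ℝ) ∧
      (seed T : ℝ) ≤ 2 + Real.logb (Fintype.card R) ℓ :=
  seed_eq_general hR T u hne hdisj hT
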